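/- arXiv:0812.4060 — 3 statements merged into one kernel-verified Lean document; each statement's English description precedes it below -/
import Mathlib

section
/- Let (X, d_X) and (Y, d_Y) be nonempty compact metric spaces and ε > 0. If d_GH(X, Y) ≤ ε, then Cov(3ε, Y) ≤ Cov(ε, X). -/
/-! Realize `d_GH(X, Y)` by the optimal coupling of Mathlib, in which every point of `X` is within
`ε` of a point of `Y` and conversely. Moving the centres of an optimal `ε`-cover of `X` to nearby
points of `Y` yields a cover of `Y` by balls of radius `ε + ε + ε`, by the triangle inequality. -/

noncomputable def covNum (ε : ℝ) (X : Type*) [MetricSpace X] : ℕ :=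
  sInf {k : ℕ | ∃ c : Fin k → X, ∀ p : X, ∃ i, p ∈ Metric.ball (c i) ε}

open Metric GromovHausdorff

theorem exists_cover_card_covNum {X : Type*} [MetricSpace X] [CompactSpace X] {ε : ℝ}
    (hε : 0 < ε) : ∃ c : Fin (covNum ε X) → X, ∀ p : X, ∃ i, p ∈ ball (c i) ε := by
  obtain ⟨t, -, ht, hcover⟩ := finite_cover_balls_of_compact (isCompact_univ (X := X)) hε
  obtain ⟨n, c, -, rfl⟩ := ht.fin_param
  have hc (p : X) : ∃ i, p ∈ ball (c i) ε := by simpa using hcover (Set.mem_univ p)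
  exact Nat.sInf_mem (s := {k | ∃ c : Fin k → X, ∀ p : X, ∃ i, p ∈ ball (c i) ε}) ⟨n, c, hc⟩

theorem covNum_le_of_isometry_of_cover {X Y Z : Type*} [MetricSpace X] [MetricSpace Y]
    [PseudoMetricSpace Z] {Φ : X → Z} {Ψ : Y → Z} (hΦ : Isometry Φ) (hΨ : Isometry Ψ) {δ ε : ℝ}
    (hXY : ∀ x, ∃ y, dist (Φ x) (Ψ y) ≤ ε) (hYX : ∀ y, ∃ x, dist (Ψ y) (Φ x) ≤ ε)
    {k : ℕ} {c : Fin k → X} (hc : ∀ p, ∃ i, p ∈ ball (c i) δ) :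
    covNum (δ + 2 * ε) Y ≤ k := by
  choose y hy using hXY
  refine Nat.sInf_le ⟨fun i => y (c i), fun p => ?_⟩
  obtain ⟨x, hpx⟩ := hYX p
  obtain ⟨i, hxi⟩ := hc x
  refine ⟨i, ?_⟩
  have hxi' : dist (Φ x) (Φ (c i)) < δ := by rwa [hΦ.dist_eq]
  rw [mem_ball, ← hΨ.dist_eq]
  calc dist (Ψ p) (Ψ (y (c i)))
      ≤ dist (Ψ p) (Φ x) + dist (Φ x) (Φ (c i)) + dist (Φ (c i)) (Ψ (y (c i))) :=
        dist_triangle4 _ _ _ _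
    _ < δ + 2 * ε := by linarith [hy (c i)]

theorem exists_mem_dist_le_of_hausdorffDist_le {Z : Type*} [PseudoMetricSpace Z] {s t : Set Z}
    {x : Z} {r : ℝ} (hx : x ∈ s) (ht : IsCompact t) (ht' : t.Nonempty)
    (hfin : hausdorffEDist s t ≠ ⊤) (hr : hausdorffDist s t ≤ r) : ∃ y ∈ t, dist x y ≤ r := by
  obtain ⟨y, hy, hxy⟩ := ht.exists_infDist_eq_dist ht' x
  exact ⟨y, hy, hxy ▸ (infDist_le_hausdorffDist_of_mem hx hfin).trans hr⟩

section OptimalCoupling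

variable (X Y : Type*) [MetricSpace X] [MetricSpace Y] [CompactSpace X] [CompactSpace Y]
  [Nonempty X] [Nonempty Y]

theorem isCompact_range_optimalGHInjl : IsCompact (Set.range (optimalGHInjl X Y)) :=
  isCompact_range (isometry_optimalGHInjl X Y).continuous

theorem isCompact_range_optimalGHInjr : IsCompact (Set.range (optimalGHInjr X Y)) :=
  isCompact_range (isometry_optimalGHInjr X Y).continuous

theorem hausdorffEDist_range_optimalGHInj_ne_top :
    hausdorffEDist (Set.range (optimalGHInjl X Y)) (Set.range (optimalGHInjr X Y)) ≠ ⊤ :=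
  hausdorffEDist_ne_top_of_nonempty_of_bounded (Set.range_nonempty _) (Set.range_nonempty _)
    (isCompact_range_optimalGHInjl X Y).isBounded (isCompact_range_optimalGHInjr X Y).isBounded

theorem exists_dist_optimalGHInjl_optimalGHInjr_le (x : X) :
    ∃ y, dist (optimalGHInjl X Y x) (optimalGHInjr X Y y) ≤ ghDist X Y := by
  obtain ⟨_, ⟨y, rfl⟩, hy⟩ := exists_mem_dist_le_of_hausdorffDist_le (Set.mem_range_self x)
    (isCompact_range_optimalGHInjr X Y) (Set.range_nonempty _)
    (hausdorffEDist_range_optimalGHInj_ne_top X Y) hausdorffDist_optimal.le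
  exact ⟨y, hy⟩

theorem exists_dist_optimalGHInjr_optimalGHInjl_le (y : Y) :
    ∃ x, dist (optimalGHInjr X Y y) (optimalGHInjl X Y x) ≤ ghDist X Y := by
  obtain ⟨_, ⟨x, rfl⟩, hx⟩ := exists_mem_dist_le_of_hausdorffDist_le (Set.mem_range_self y)
    (isCompact_range_optimalGHInjl X Y) (Set.range_nonempty _)
    (by rw [hausdorffEDist_comm]; exact hausdorffEDist_range_optimalGHInj_ne_top X Y)
    (hausdorffDist_comm.trans hausdorffDist_optimal).le
  exact ⟨x, hx⟩

end OptimalCoupling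

/-- If `d_GH(X, Y) ≤ ε` for nonempty compact metric spaces `X`, `Y`, then
`Cov(3ε, Y) ≤ Cov(ε, X)`. -/
theorem covNum_le_covNum_of_ghDist_le {X : Type*} {Y : Type*} [MetricSpace X] [MetricSpace Y]
    [CompactSpace X] [CompactSpace Y] [Nonempty X] [Nonempty Y]
    (ε : ℝ) (hε : 0 < ε) (hGH : GromovHausdorff.ghDist X Y ≤ ε) :
    covNum (3 * ε) Y ≤ covNum ε X := by
  obtain ⟨c, hc⟩ := exists_cover_card_covNum (X := X) hε
  have hXY (x : X) : ∃ y, dist (optimalGHInjl X Y x) (optimalGHInjr X Y y) ≤ ε :=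
    (exists_dist_optimalGHInjl_optimalGHInjr_le X Y x).imp fun _ h => h.trans hGH
  have hYX (y : Y) : ∃ x, dist (optimalGHInjr X Y y) (optimalGHInjl X Y x) ≤ ε :=
    (exists_dist_optimalGHInjr_optimalGHInjl_le X Y y).imp fun _ h => h.trans hGH
  have := covNum_le_of_isometry_of_cover (isometry_optimalGHInjl X Y)
    (isometry_optimalGHInjr X Y) hXY hYX hc
  rwa [show ε + 2 * ε = 3 * ε by ring] at this
end

section
/- Let (X, d_X) and (Y, d_Y) be nonempty compact metric spaces and ε > 0. If Cov(ε, X) < Cap(3ε, Y), then d_GH(X, Y) > ε. -/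
/-- `capNum ε X` is the largest cardinality of a family of pairwise disjoint open balls of
radius `ε` in `X`. -/
noncomputable def capNum (ε : ℝ) (X : Type*) [MetricSpace X] : ℕ :=
  sSup {k : ℕ | ∃ c : Fin k → X,
    Pairwise fun i j => Disjoint (Metric.ball (c i) ε) (Metric.ball (c j) ε)}

open Metric Set GromovHausdorff

/-- Lemma `LemmaCapCov`. If `Cov(ε, X) < Cap(3ε, Y)` for nonempty compact
metric spaces `X`, `Y`, then `d_GH(X, Y) > ε`. -/
theorem ghDist_gt_of_covNum_lt_capNum {X : Type*} {Y : Type*} [MetricSpace X] [MetricSpace Y]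
    [CompactSpace X] [CompactSpace Y] [Nonempty X] [Nonempty Y]
    (ε : ℝ) (hε : 0 < ε) (h : covNum ε X < capNum (3 * ε) Y) :
    ε < GromovHausdorff.ghDist X Y := by
  classical
  by_contra hle
  push_neg at hle
  -- a covering witness for `covNum ε X`
  have hcovmem : covNum ε X ∈
      {k : ℕ | ∃ c : Fin k → X, ∀ p : X, ∃ i, p ∈ Metric.ball (c i) ε} := by
    apply Nat.sInf_mem
    obtain ⟨t, -, htfin, htcov⟩ :=
      finite_cover_balls_of_compact (isCompact_univ (X := X)) hε
    refine ⟨htfin.toFinset.card, fun i => (htfin.toFinset.equivFin.symm i : X), ?_⟩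
    intro p
    obtain ⟨x, hx, hpx⟩ := mem_iUnion₂.1 (htcov (mem_univ p))
    refine ⟨htfin.toFinset.equivFin ⟨x, htfin.mem_toFinset.mpr hx⟩, ?_⟩
    simpa using hpx
  obtain ⟨c, hc⟩ := hcovmem
  -- a packing witness for `capNum (3ε) Y`
  have hcapmem : capNum (3 * ε) Y ∈
      {k : ℕ | ∃ c : Fin k → Y,
        Pairwise fun i j => Disjoint (Metric.ball (c i) (3 * ε)) (Metric.ball (c j) (3 * ε))} := by
    by_cases hb : BddAbove {k : ℕ | ∃ c : Fin k → Y,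
        Pairwise fun i j => Disjoint (Metric.ball (c i) (3 * ε)) (Metric.ball (c j) (3 * ε))}
    · refine Nat.sSup_mem ⟨0, Fin.elim0, ?_⟩ hb
      intro i
      exact i.elim0
    · exfalso
      have : capNum (3 * ε) Y = 0 := by
        unfold capNum
        rw [csSup_of_not_bddAbove hb, csSup_empty]
        rfl
      rw [this] at h
      exact Nat.not_lt_zero _ h
  obtain ⟨y, hy⟩ := hcapmem
  -- the optimal coupling
  set f := optimalGHInjl X Y with hfdef
  set g := optimalGHInjr X Y with hgdef
  have hf := isometry_optimalGHInjl X Y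
  have hg := isometry_optimalGHInjr X Y
  have hXc : IsCompact (range f) := isCompact_range hf.continuous
  have hYc : IsCompact (range g) := isCompact_range hg.continuous
  have hne : EMetric.hausdorffEdist (range f) (range g) ≠ ⊤ :=
    hausdorffEdist_ne_top_of_nonempty_of_bounded (range_nonempty f) (range_nonempty g)
      hXc.isBounded hYc.isBounded
  have hH : hausdorffDist (range f) (range g) ≤ ε := by
    rw [hausdorffDist_optimal]; exact hle
  -- for each packing center pick a nearby point of `X`
  have hx : ∀ i, ∃ x : X, dist (g (y i)) (f x) ≤ ε := by
    intro i
    have h1 : infDist (g (y i)) (range f) ≤ ε := by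
      refine le_trans ?_ hH
      rw [hausdorffDist_comm]
      exact infDist_le_hausdorffDist_of_mem (mem_range_self _)
        (by rwa [EMetric.hausdorffEdist_comm])
    obtain ⟨z, hz, hzd⟩ := hXc.exists_infDist_eq_dist (range_nonempty f) (g (y i))
    obtain ⟨x, rfl⟩ := hz
    exact ⟨x, by rw [← hzd]; exact h1⟩
  choose x hxd using hx
  -- for each cover center pick a nearby point of `Y`
  have hy' : ∀ m, ∃ y' : Y, dist (f (c m)) (g y') ≤ ε := by
    intro m
    have h1 : infDist (f (c m)) (range g) ≤ ε :=
      le_trans (infDist_le_hausdorffDist_of_mem (mem_range_self _) hne) hH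
    obtain ⟨z, hz, hzd⟩ := hYc.exists_infDist_eq_dist (range_nonempty g) (f (c m))
    obtain ⟨y', rfl⟩ := hz
    exact ⟨y', by rw [← hzd]; exact h1⟩
  choose y' hy'd using hy'
  -- map each packing index to a cover index
  have hmap : ∀ i, ∃ m, x i ∈ Metric.ball (c m) ε := fun i => hc (x i)
  choose F hF using hmap
  -- `F` is injective
  have hinj : Function.Injective F := by
    intro i j hij
    by_contra hne'
    have key : ∀ k, F k = F i → y' (F i) ∈ Metric.ball (y k) (3 * ε) := by
      intro k hk
      have h1 : dist (g (y k)) (f (c (F i))) < 2 * ε := by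
        calc dist (g (y k)) (f (c (F i)))
            ≤ dist (g (y k)) (f (x k)) + dist (f (x k)) (f (c (F i))) := dist_triangle _ _ _
          _ < ε + ε := by
              refine add_lt_add_of_le_of_lt (hxd k) ?_
              rw [hf.dist_eq]
              have := hF k
              rw [hk] at this
              exact mem_ball.1 this
          _ = 2 * ε := by ring
      have h2 : dist (y k) (y' (F i)) < 3 * ε := by
        have : dist (g (y k)) (g (y' (F i))) < 3 * ε := by
          calc dist (g (y k)) (g (y' (F i)))
              ≤ dist (g (y k)) (f (c (F i))) + dist (f (c (F i))) (g (y' (F i))) :=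
                dist_triangle _ _ _
            _ < 2 * ε + ε := add_lt_add_of_lt_of_le h1 (hy'd (F i))
            _ = 3 * ε := by ring
        rwa [hg.dist_eq] at this
      exact mem_ball'.1 h2
    have hmemi := key i rfl
    have hmemj := key j hij.symm
    exact (hy hne').ne_of_mem hmemi hmemj rfl
  have := Fintype.card_le_of_injective F hinj
  simp only [Fintype.card_fin] at this
  omega
end

section
/- Let (X, d) be a nonempty compact length space, p ≥ 1 a real number, and μ a p-dimensional Bishop measure on (X, d) with constants β ≥ 1 and η₀ > 0. Set C = β · 2^p and θ = η₀/2. Then for every 0 < r < θ and every α > 0 with αr < θ, one has α^{-p} C^{-2} · Cap(r, X) ≤ Cap(αr, X) ≤ α^{-p} C^{2} · Cap(r, X). -/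
/-!
The doubles of a maximal family of disjoint `ε`-balls cover `X`. Hence `μ X` is bounded below by
`Cap(ε) β⁻¹ ε^p` (disjoint balls) and above by `Cap(δ) β (2δ)^p` (the cover), which gives
`Cap(ε) (ε/δ)^p ≤ β² 2^p Cap(δ) ≤ C² Cap(δ)`; apply this with `(ε, δ) = (r, αr)` and `(αr, r)`.
-/

open MeasureTheory Metric ENNReal

/-- A metric space is a *length space* if the distance between any two points equals the
infimum of the lengths (total variations) of continuous curves `γ : [0,1] → X` joining them. -/
def IsLengthSpace (X : Type*) [MetricSpace X] : Prop :=
  ∀ x y : X, edist x y =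
    ⨅ γ : {γ : ℝ → X // ContinuousOn γ (Set.Icc 0 1) ∧ γ 0 = x ∧ γ 1 = y},
      eVariationOn γ.1 (Set.Icc 0 1)

/-- A Borel measure `μ` on a metric space `X` is a `p`-dimensional *Bishop measure* with
constants `β ≥ 1` and `η₀ > 0` if `β⁻¹ η^p ≤ μ(B(x, η)) ≤ β η^p` for all `0 < η < η₀`
and all `x ∈ X`. -/
def IsBishopMeasure {X : Type*} [MetricSpace X] [MeasurableSpace X]
    (μ : Measure X) (p β η₀ : ℝ) : Prop :=
  ∀ x : X, ∀ η : ℝ, 0 < η → η < η₀ →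
    ENNReal.ofReal (β⁻¹ * η ^ p) ≤ μ (ball x η) ∧
      μ (ball x η) ≤ ENNReal.ofReal (β * η ^ p)

def IsBallPacking {X : Type*} [MetricSpace X] (ε : ℝ) {k : ℕ} (c : Fin k → X) : Prop :=
  Pairwise fun i j => Disjoint (ball (c i) ε) (ball (c j) ε)

section Packing

variable {X : Type*} [MetricSpace X] {ε : ℝ} {k : ℕ} {c : Fin k → X}

theorem IsBallPacking.notMem_ball (hε : 0 < ε) (hc : IsBallPacking ε c) {i j : Fin k}
    (hij : i ≠ j) : c i ∉ ball (c j) ε :=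
  fun h => Set.disjoint_left.1 (hc hij) (mem_ball_self hε) h

/-- Centers of a packing lie in distinct balls of a finite `ε / 2`-cover. -/
theorem bddAbove_isBallPacking_card [CompactSpace X] (hε : 0 < ε) :
    BddAbove {k : ℕ | ∃ c : Fin k → X, IsBallPacking ε c} := by
  obtain ⟨t, -, ht, hcover⟩ :=
    finite_cover_balls_of_compact (isCompact_univ (X := X)) (half_pos hε)
  refine ⟨ht.toFinset.card, fun k ⟨c, hc⟩ => ?_⟩
  have hcenter (i : Fin k) : ∃ x : ht.toFinset, c i ∈ ball x.1 (ε / 2) := by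
    obtain ⟨x, hx, hi⟩ := Set.mem_iUnion₂.1 (hcover (Set.mem_univ (c i)))
    exact ⟨⟨x, ht.mem_toFinset.2 hx⟩, hi⟩
  choose f hf using hcenter
  have hinj : Function.Injective f := by
    intro i j hij
    by_contra hne
    refine hc.notMem_ball hε hne ?_
    have hi := hf i
    have hj := hf j
    rw [← hij, mem_ball] at hj
    rw [mem_ball] at hi ⊢
    linarith [dist_triangle_right (c i) (c j) (f i)]
  simpa using Fintype.card_le_of_injective f hinj

theorem IsBallPacking.snoc (hc : IsBallPacking ε c) {x : X}
    (hx : ∀ i, 2 * ε ≤ dist x (c i)) : IsBallPacking ε (Fin.snoc c x : Fin (k + 1) → X) := by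
  intro i j hij
  induction i using Fin.lastCases with
  | last =>
    induction j using Fin.lastCases with
    | last => exact absurd rfl hij
    | cast j =>
      have : Disjoint (ball x ε) (ball (c j) ε) := ball_disjoint_ball (by linarith [hx j])
      simpa using this
  | cast i =>
    induction j using Fin.lastCases with
    | last =>
      have : Disjoint (ball (c i) ε) (ball x ε) :=
        ball_disjoint_ball (by rw [dist_comm]; linarith [hx i])
      simpa using this
    | cast j => simpa using hc fun h => hij (congrArg Fin.castSucc h)

variable [CompactSpace X]

theorem IsBallPacking.le_capNum (hε : 0 < ε) (hc : IsBallPacking ε c) : k ≤ capNum ε X :=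
  le_csSup (bddAbove_isBallPacking_card hε) ⟨c, hc⟩

theorem exists_isBallPacking_capNum (hε : 0 < ε) :
    ∃ c : Fin (capNum ε X) → X, IsBallPacking ε c :=
  Nat.sSup_mem (s := {k : ℕ | ∃ c : Fin k → X, IsBallPacking ε c})
    ⟨0, finZeroElim, fun i => i.elim0⟩ (bddAbove_isBallPacking_card hε)

/-- A packing of maximal size cannot be extended, so the doubled balls cover the space. -/
theorem iUnion_ball_two_mul_of_capNum (hε : 0 < ε) {c : Fin (capNum ε X) → X}
    (hc : IsBallPacking ε c) : ⋃ i, ball (c i) (2 * ε) = Set.univ := by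
  refine Set.eq_univ_of_forall fun x => ?_
  by_contra hx
  simp only [Set.mem_iUnion, mem_ball, not_exists, not_lt] at hx
  exact (capNum ε X).not_succ_le_self ((hc.snoc hx).le_capNum hε)

end Packing

section Measure

variable {X : Type*} [MetricSpace X] [MeasurableSpace X] {μ : Measure X} {ε : ℝ} {k : ℕ}
  {c : Fin k → X}

theorem IsBallPacking.card_mul_le_measure_univ [OpensMeasurableSpace X]
    (hc : IsBallPacking ε c) {a : ℝ≥0∞} (ha : ∀ x, a ≤ μ (ball x ε)) : k * a ≤ μ Set.univ :=
  calc (k : ℝ≥0∞) * a = ∑ _i : Fin k, a := by simp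
    _ ≤ ∑ i, μ (ball (c i) ε) := Finset.sum_le_sum fun i _ => ha (c i)
    _ = μ (⋃ i, ball (c i) ε) := by
      rw [measure_iUnion hc fun _ => measurableSet_ball, tsum_fintype]
    _ ≤ μ Set.univ := measure_mono (Set.subset_univ _)

theorem measure_univ_le_card_mul (hcover : ⋃ i, ball (c i) ε = Set.univ) {b : ℝ≥0∞}
    (hb : ∀ x, μ (ball x ε) ≤ b) : μ Set.univ ≤ k * b :=
  calc μ Set.univ = μ (⋃ i, ball (c i) ε) := by rw [hcover]
    _ ≤ ∑ i, μ (ball (c i) ε) := measure_iUnion_fintype_le _ _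
    _ ≤ ∑ _i : Fin k, b := Finset.sum_le_sum fun i _ => hb (c i)
    _ = k * b := by simp

variable [CompactSpace X] [OpensMeasurableSpace X]

theorem capNum_mul_le_capNum_mul {δ : ℝ} (hε : 0 < ε) (hδ : 0 < δ) {a b : ℝ≥0∞}
    (ha : ∀ x, a ≤ μ (ball x ε)) (hb : ∀ x, μ (ball x (2 * δ)) ≤ b) :
    capNum ε X * a ≤ capNum δ X * b := by
  obtain ⟨c, hc⟩ := exists_isBallPacking_capNum (X := X) hε
  obtain ⟨d, hd⟩ := exists_isBallPacking_capNum (X := X) hδ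
  exact (hc.card_mul_le_measure_univ ha).trans
    (measure_univ_le_card_mul (iUnion_ball_two_mul_of_capNum hδ hd) hb)

theorem IsBishopMeasure.capNum_mul_div_rpow_le {p β η₀ δ : ℝ}
    (hμ : IsBishopMeasure μ p β η₀) (hβ : 0 < β) (hε : 0 < ε) (hδ : 0 < δ) (hεη : ε < η₀)
    (hδη : 2 * δ < η₀) : (capNum ε X : ℝ) * (ε / δ) ^ p ≤ β ^ 2 * 2 ^ p * capNum δ X := by
  have h := capNum_mul_le_capNum_mul hε hδ (fun x => (hμ x ε hε hεη).1)
    (fun x => (hμ x (2 * δ) (by positivity) hδη).2)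
  rw [← ofReal_natCast, ← ofReal_natCast, ← ENNReal.ofReal_mul (by positivity),
    ← ENNReal.ofReal_mul (by positivity), ENNReal.ofReal_le_ofReal_iff (by positivity),
    Real.mul_rpow zero_le_two hδ.le] at h
  have hδp : 0 < δ ^ p := Real.rpow_pos_of_pos hδ p
  calc (capNum ε X : ℝ) * (ε / δ) ^ p = β * (capNum ε X * (β⁻¹ * ε ^ p)) / δ ^ p := by
        rw [Real.div_rpow hε.le hδ.le]
        field_simp
    _ ≤ β * (capNum δ X * (β * (2 ^ p * δ ^ p))) / δ ^ p := by gcongr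
    _ = β ^ 2 * 2 ^ p * capNum δ X := by
        field_simp

end Measure

theorem capNum_scaling_general {X : Type*} [MetricSpace X] [CompactSpace X]
    [MeasurableSpace X] [BorelSpace X]
    (μ : Measure X) (p β η₀ : ℝ)
    (hp : 1 ≤ p) (hβ : 1 ≤ β) (hμ : IsBishopMeasure μ p β η₀)
    (C θ : ℝ) (hC : C = β * (2 : ℝ) ^ p) (hθ : θ = η₀ / 2) :
    ∀ r α : ℝ, 0 < r → r < θ → 0 < α → α * r < θ →
      α ^ (-p) * (C ^ 2)⁻¹ * (capNum r X : ℝ) ≤ (capNum (α * r) X : ℝ) ∧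
        (capNum (α * r) X : ℝ) ≤ α ^ (-p) * C ^ 2 * (capNum r X : ℝ) := by
  intro r α hr hrθ hα hαrθ
  subst hθ
  have hβ₀ : 0 < β := by linarith
  have hαr : 0 < α * r := mul_pos hα hr
  have hK : β ^ 2 * 2 ^ p ≤ C ^ 2 := by
    rw [hC, mul_pow]
    gcongr
    exact le_self_pow₀ (Real.one_le_rpow one_le_two (by linarith)) two_ne_zero
  have hsmall := hμ.capNum_mul_div_rpow_le hβ₀ hr hαr (by linarith) (by linarith)
  have hlarge := hμ.capNum_mul_div_rpow_le hβ₀ hαr hr (by linarith) (by linarith)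
  rw [div_mul_cancel_right₀ hr.ne', Real.inv_rpow hα.le, ← Real.rpow_neg hα.le] at hsmall
  rw [mul_div_cancel_right₀ _ hr.ne'] at hlarge
  have hαp : α ^ (-p) * α ^ p = 1 := by
    rw [← Real.rpow_add hα, neg_add_cancel, Real.rpow_zero]
  have hC₀ : 0 < C ^ 2 := by rw [hC]; positivity
  have hCK (N : ℕ) : β ^ 2 * 2 ^ p * N ≤ C ^ 2 * N := by gcongr
  constructor
  · calc α ^ (-p) * (C ^ 2)⁻¹ * capNum r X = (C ^ 2)⁻¹ * (capNum r X * α ^ (-p)) := by ring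
      _ ≤ (C ^ 2)⁻¹ * (C ^ 2 * capNum (α * r) X) :=
          mul_le_mul_of_nonneg_left (hsmall.trans (hCK _)) (by positivity)
      _ = capNum (α * r) X := inv_mul_cancel_left₀ hC₀.ne' _
  · calc (capNum (α * r) X : ℝ) = α ^ (-p) * (capNum (α * r) X * α ^ p) := by
          rw [mul_left_comm, hαp, mul_one]
      _ ≤ α ^ (-p) * (C ^ 2 * capNum r X) :=
          mul_le_mul_of_nonneg_left (hlarge.trans (hCK _)) (by positivity)
      _ = α ^ (-p) * C ^ 2 * capNum r X := by ring

/-- Corollary `CorollaryCapEstimation`. For a nonempty compact length space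
`X` with a `p`-dimensional Bishop measure `μ` (`p ≥ 1`, constants `β ≥ 1`, `η₀ > 0`), setting
`C = β · 2^p` and `θ = η₀/2`, for all `0 < r < θ` and `α > 0` with `αr < θ` one has
`α^{-p} C^{-2} · Cap(r, X) ≤ Cap(αr, X) ≤ α^{-p} C^{2} · Cap(r, X)`. -/
theorem capNum_scaling {X : Type*} [MetricSpace X] [CompactSpace X] [Nonempty X]
    [MeasurableSpace X] [BorelSpace X]
    (hX : IsLengthSpace X) (μ : Measure X) (p β η₀ : ℝ)
    (hp : 1 ≤ p) (hβ : 1 ≤ β) (hη₀ : 0 < η₀) (hμ : IsBishopMeasure μ p β η₀)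
    (C θ : ℝ) (hC : C = β * (2 : ℝ) ^ p) (hθ : θ = η₀ / 2) :
    ∀ r α : ℝ, 0 < r → r < θ → 0 < α → α * r < θ →
      α ^ (-p) * (C ^ 2)⁻¹ * (capNum r X : ℝ) ≤ (capNum (α * r) X : ℝ) ∧
        (capNum (α * r) X : ℝ) ≤ α ^ (-p) * C ^ 2 * (capNum r X : ℝ) :=
  capNum_scaling_general μ p β η₀ hp hβ hμ C θ hC hθ
end
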